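/- Let R be a commutative ring, a ∈ R a unit, and define h̃_m(x₁,…,x_n) = ∑_{1≤i₁≤…≤i_m≤n} a^{|{i₁,…,i_m}|−1} x_{i₁}⋯x_{i_m} as above. Then for all n ≥ 1 and m ≥ 1: h̃_m(x₁,…,x_n) = h̃_m(x₁,…,x_{n−1}) + h̃_{m−1}(x₁,…,x_n)·x_n − (1−a)·h̃_{m−1}(x₁,…,x_{n−1})·x_n. -/

import Mathlib

/-!
Split the multisets of size `m + 1` on `{0, …, n}` by whether they contain `n`. Those that do
are `n ::ₘ μ` with `μ` of size `m` on `{0, …, n}`, and adding `n` multiplies the weight of `μ`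
by `x n` if `n ∈ μ`, but by `a * x n` otherwise, since a new distinct index appears. The `μ`
avoiding `n` are those counted by `htilde a x m n`, so compared with `htilde a x m (n + 1) * x n`
they contribute an extra `(a - 1) * htilde a x m n * x n`.
-/

/-- The modified complete symmetric polynomial
`h̃_m(x₁,…,x_n) = ∑_{1≤i₁≤…≤i_m≤n} a^{|{i₁,…,i_m}|−1} x_{i₁}⋯x_{i_m}` of the paper,
where `a` is a unit of the commutative ring `R`, `|{i₁,…,i_m}|` is the number of distinct
values among `i₁,…,i_m`, and the variables are `x 0, …, x (n-1)` (so `h̃₀ = a⁻¹`).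
Weakly increasing sequences `i₁ ≤ … ≤ i_m` of elements of `{0,…,n-1}` are identified with
multisets of size `m` on `{0,…,n-1}`. -/
noncomputable def htilde {R : Type*} [CommRing R] (a : Rˣ) (x : ℕ → R) (m n : ℕ) : R :=
  ∑ μ ∈ (Finset.range n).sym m,
    ((a ^ ((μ.1.toFinset.card : ℤ) - 1) : Rˣ) : R) * (μ.1.map x).prod

namespace Finset

variable {α : Type*} [DecidableEq α]

theorem filter_notMem_sym_insert {a : α} {s : Finset α} (ha : a ∉ s) (k : ℕ) :
    ((insert a s).sym k).filter (fun μ => a ∉ μ) = s.sym k := by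
  ext μ
  simp only [mem_filter, mem_sym_iff, mem_insert]
  constructor
  · rintro ⟨hμ, haμ⟩ b hb
    exact (hμ b hb).resolve_left (by rintro rfl; exact haμ hb)
  · intro hμ
    exact ⟨fun b hb => Or.inr (hμ b hb), fun haμ => ha (hμ a haμ)⟩

theorem filter_mem_sym_succ {a : α} {t : Finset α} (ha : a ∈ t) (k : ℕ) :
    ((t.sym (k + 1)).filter fun μ => a ∈ μ) = (t.sym k).image (Sym.cons a) := by
  ext μ
  simp only [mem_filter, mem_image, mem_sym_iff]
  constructor
  · rintro ⟨hμ, haμ⟩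
    refine ⟨μ.erase a haμ, fun b hb => hμ b ?_, Sym.cons_erase haμ⟩
    rw [← Sym.cons_erase haμ]
    exact Sym.mem_cons.2 (Or.inr hb)
  · rintro ⟨ν, hν, rfl⟩
    exact ⟨fun b hb => (Sym.mem_cons.1 hb).elim (· ▸ ha) (hν b), Sym.mem_cons_self a ν⟩

theorem sum_sym_insert_succ {M : Type*} [AddCommMonoid M] {a : α} {s : Finset α} (ha : a ∉ s)
    (k : ℕ) (f : Sym α (k + 1) → M) :
    ∑ μ ∈ (insert a s).sym (k + 1), f μ
      = ∑ μ ∈ s.sym (k + 1), f μ + ∑ μ ∈ (insert a s).sym k, f (a ::ₛ μ) := by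
  rw [← sum_filter_add_sum_filter_not _ (fun μ => a ∈ μ), filter_notMem_sym_insert ha,
    filter_mem_sym_succ (mem_insert_self a s),
    sum_image fun _ _ _ _ => (Sym.cons_inj_right a _ _).1, add_comm]

end Finset

open Finset

section htilde

variable {R : Type*} [CommRing R] (a : Rˣ) (x : ℕ → R)

noncomputable def htildeWeight (s : Multiset ℕ) : R :=
  ((a ^ ((s.toFinset.card : ℤ) - 1) : Rˣ) : R) * (s.map x).prod

theorem htilde_eq_sum_htildeWeight (m n : ℕ) :
    htilde a x m n = ∑ μ ∈ (range n).sym m, htildeWeight a x μ :=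
  rfl

theorem htildeWeight_cons_of_mem {s : Multiset ℕ} {i : ℕ} (hi : i ∈ s) :
    htildeWeight a x (i ::ₘ s) = htildeWeight a x s * x i := by
  rw [htildeWeight, htildeWeight, Multiset.toFinset_cons,
    insert_eq_of_mem (Multiset.mem_toFinset.2 hi), Multiset.map_cons, Multiset.prod_cons]
  ring

theorem htildeWeight_cons_of_notMem {s : Multiset ℕ} {i : ℕ} (hi : i ∉ s) :
    htildeWeight a x (i ::ₘ s) = a * htildeWeight a x s * x i := by
  rw [htildeWeight, htildeWeight, Multiset.toFinset_cons,
    card_insert_of_notMem (by simpa using hi), Multiset.map_cons, Multiset.prod_cons,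
    Nat.cast_succ, add_sub_right_comm, zpow_add_one, Units.val_mul]
  ring

theorem htilde_succ_succ (m n : ℕ) :
    htilde a x (m + 1) (n + 1)
      = htilde a x (m + 1) n + ∑ μ ∈ (range (n + 1)).sym m, htildeWeight a x (n ::ₘ μ) := by
  simp only [htilde_eq_sum_htildeWeight, range_add_one]
  exact sum_sym_insert_succ notMem_range_self m _

theorem sum_htildeWeight_cons (m n : ℕ) :
    ∑ μ ∈ (range (n + 1)).sym m, htildeWeight a x (n ::ₘ μ)
      = htilde a x m (n + 1) * x n - (1 - a) * htilde a x m n * x n := by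
  have hsplit (f : Sym ℕ m → R) :=
    (sum_filter_add_sum_filter_not ((range (n + 1)).sym m) (fun μ => n ∈ μ) f).symm
  have havoid : ((range (n + 1)).sym m).filter (fun μ => n ∉ μ) = (range n).sym m := by
    rw [range_add_one]
    exact filter_notMem_sym_insert notMem_range_self m
  have hcontaining :
      ∑ μ ∈ ((range (n + 1)).sym m).filter (fun μ => n ∈ μ), htildeWeight a x (n ::ₘ μ)
        = (∑ μ ∈ ((range (n + 1)).sym m).filter (fun μ => n ∈ μ), htildeWeight a x μ) * x n := by
    rw [sum_mul]
    exact sum_congr rfl fun μ hμ => htildeWeight_cons_of_mem a x (mem_filter.1 hμ).2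
  have havoiding :
      ∑ μ ∈ ((range (n + 1)).sym m).filter (fun μ => n ∉ μ), htildeWeight a x (n ::ₘ μ)
        = a * htilde a x m n * x n := by
    rw [htilde_eq_sum_htildeWeight, ← havoid, mul_sum, sum_mul]
    exact sum_congr rfl fun μ hμ => htildeWeight_cons_of_notMem a x (mem_filter.1 hμ).2
  rw [hsplit, hcontaining, havoiding, htilde_eq_sum_htildeWeight a x m (n + 1), hsplit, havoid,
    ← htilde_eq_sum_htildeWeight]
  ring

end htilde

/-- Let `R` be a commutative ring, `a ∈ R` a unit, and `h̃_m` the modified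
complete symmetric polynomial as above. Then for all `n ≥ 1` and `m ≥ 1`:
`h̃_m(x₁,…,x_n) = h̃_m(x₁,…,x_{n−1}) + h̃_{m−1}(x₁,…,x_n)·x_n − (1−a)·h̃_{m−1}(x₁,…,x_{n−1})·x_n`. -/
theorem stmt_10 (R : Type*) [CommRing R] (a : Rˣ) (x : ℕ → R) (m n : ℕ)
    (hn : 1 ≤ n) (hm : 1 ≤ m) :
    htilde a x m n =
      htilde a x m (n - 1) + htilde a x (m - 1) n * x (n - 1)
        - (1 - (a : R)) * htilde a x (m - 1) (n - 1) * x (n - 1) := by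
  obtain ⟨n, rfl⟩ : ∃ k, n = k + 1 := ⟨n - 1, by omega⟩
  obtain ⟨m, rfl⟩ : ∃ k, m = k + 1 := ⟨m - 1, by omega⟩
  simp only [Nat.add_sub_cancel]
  rw [htilde_succ_succ, sum_htildeWeight_cons]
  ring
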